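/- arXiv:1812.03688 — 2 statements merged into one kernel-verified Lean document; each statement's English description precedes it below -/
import Mathlib

section
/- Let ω ∈ [0,1], let Q = [[D, −C], [−B, A]] with Q_ω a nonsingular M-matrix and Q_ω·1 > 0, let Q̃ = [[D̃, −C̃], [−B̃, Ã]] be a real nonsingular M-matrix with Q̃ ≤ Q_ω and Q̃·1 > 0, let Φ̃ be the minimal nonnegative solution of XC̃X − XD̃ − ÃX + B̃ = 0, and let Φ be the unique solution of XCX − XD − AX + B = 0 with |Φ| ≤ Φ̃. Let Φ_k and Φ̃_k be the Newton sequences defined by Φ₀ = 0, (A − Φ_kC)Φ_{k+1} + Φ_{k+1}(D − CΦ_k) = B − Φ_kCΦ_k and Φ̃₀ = 0, (Ã − Φ̃_kC̃)Φ̃_{k+1} + Φ̃_{k+1}(D̃ − C̃Φ̃_k) = B̃ − Φ̃_kC̃Φ̃_k. Then |Φ − Φ_k| ≤ Φ̃ − Φ̃_k entrywise for all k, and Φ_k converges to Φ. -/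
open Matrix Filter Kronecker

noncomputable section

/-- The ω-weighted linear functional `z ↦ ω·Re z + (1-ω)·Im z`. -/
def wlin (ω : ℝ) (z : ℂ) : ℝ := ω * z.re + (1 - ω) * z.im

/-- The ω-comparison matrix of a complex square matrix. -/
def omegaComp {N : Type*} [DecidableEq N] (ω : ℝ) (B : Matrix N N ℂ) : Matrix N N ℝ :=
  Matrix.of fun i j => if i = j then wlin ω (B i i) else -‖B i j‖

/-- A real square matrix is a nonsingular M-matrix: nonpositive off-diagonal entries and
`M *ᵥ u > 0` entrywise for some entrywise positive `u`. -/
def IsNonsingMMatrix {N : Type*} [Fintype N] (M : Matrix N N ℝ) : Prop :=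
  (∀ i j, i ≠ j → M i j ≤ 0) ∧ ∃ u : N → ℝ, (∀ i, 0 < u i) ∧ ∀ i, 0 < (M *ᵥ u) i

/-- Entrywise absolute value of a complex matrix. -/
def cabs {α β : Type*} (M : Matrix α β ℂ) : Matrix α β ℝ :=
  Matrix.of fun i j => ‖M i j‖

/-!
Vectorising `X ↦ E * X + X * F` turns each Newton correction into a linear system whose matrix
is the Kronecker sum `1 ⊗ₖ E + Fᵀ ⊗ₖ 1`. For the real iteration these systems are nonsingular
M-matrices: if `Q̃ *ᵥ (p, r) > 0`, every real iterate `P` satisfies `0 ≤ P ≤ Φ̃`, `P *ᵥ p ≤ r`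
and `R̃(P) ≥ 0` (`R̃` the Riccati residual), so `r - P *ᵥ p` and `p` witness that `Ã - P * C̃`
and `D̃ - C̃ * P` are nonsingular M-matrices. The real Kronecker sum at `Φ̃ₖ` lies below the
ω-comparison matrix of the complex one at `Φₖ`, and a nonsingular M-matrix below a comparison
matrix bounds the moduli of solutions entrywise. Every Newton identity has the form
`L_P(Y) = (Y - P) C (Y - P) - R(Y)` with `L_P Y = (A - P C) Y + Y (D - C P)`, so comparing the
complex and real identities step by step gives `|Φₖ| ≤ Φ̃ₖ` and then `|Φ - Φₖ| ≤ Φ̃ - Φ̃ₖ`.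
Finally `Φ̃ₖ` increases to a nonnegative solution below `Φ̃`, which is `Φ̃` by minimality.
-/

open Topology

def IsZMatrix {N : Type*} (M : Matrix N N ℝ) : Prop :=
  ∀ i j, i ≠ j → M i j ≤ 0

def riccati {m n α : Type*} [Fintype m] [Fintype n] [Ring α] (A : Matrix m m α)
    (B : Matrix m n α) (C : Matrix n m α) (D : Matrix n n α) (X : Matrix m n α) : Matrix m n α :=
  X * C * X - X * D - A * X + B

def IsNewtonStep {m n α : Type*} [Fintype m] [Fintype n] [Ring α] (A : Matrix m m α)
    (B : Matrix m n α) (C : Matrix n m α) (D : Matrix n n α) (P P' : Matrix m n α) : Prop :=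
  (A - P * C) * P' + P' * (D - C * P) = B - P * C * P

def sylvester {a b R : Type*} [Semiring R] [DecidableEq a] [DecidableEq b] (E : Matrix a a R)
    (F : Matrix b b R) : Matrix (b × a) (b × a) R :=
  1 ⊗ₖ E + Fᵀ ⊗ₖ 1

section OmegaComparison

variable {N : Type*} [DecidableEq N] {ω : ℝ}

theorem wlin_add (ω : ℝ) (z w : ℂ) : wlin ω (z + w) = wlin ω z + wlin ω w := by
  simp only [wlin, Complex.add_re, Complex.add_im]; ring

theorem wlin_sub (ω : ℝ) (z w : ℂ) : wlin ω (z - w) = wlin ω z - wlin ω w := by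
  simp only [wlin, Complex.sub_re, Complex.sub_im]; ring

theorem wlin_le_norm (hω : ω ∈ Set.Icc (0 : ℝ) 1) (z : ℂ) : wlin ω z ≤ ‖z‖ :=
  calc wlin ω z ≤ ω * ‖z‖ + (1 - ω) * ‖z‖ :=
        add_le_add (mul_le_mul_of_nonneg_left (Complex.re_le_norm z) hω.1)
          (mul_le_mul_of_nonneg_left (Complex.im_le_norm z) (sub_nonneg.2 hω.2))
    _ = ‖z‖ := by ring

theorem omegaComp_apply_self (ω : ℝ) (M : Matrix N N ℂ) (i : N) :
    omegaComp ω M i i = wlin ω (M i i) := by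
  simp [omegaComp]

theorem omegaComp_apply_of_ne (ω : ℝ) (M : Matrix N N ℂ) {i j : N} (h : i ≠ j) :
    omegaComp ω M i j = -‖M i j‖ := by
  simp [omegaComp, h]

theorem omegaComp_mulVec_norm_le [Fintype N] (hω : ω ∈ Set.Icc (0 : ℝ) 1) (M : Matrix N N ℂ)
    (x : N → ℂ) (i : N) : (omegaComp ω M *ᵥ fun j => ‖x j‖) i ≤ ‖(M *ᵥ x) i‖ := by
  have hoff : ∑ j ∈ Finset.univ.erase i, omegaComp ω M i j * ‖x j‖ =
      -∑ j ∈ Finset.univ.erase i, ‖M i j * x j‖ := by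
    rw [← Finset.sum_neg_distrib]
    refine Finset.sum_congr rfl fun j hj => ?_
    rw [omegaComp_apply_of_ne ω M (Finset.ne_of_mem_erase hj).symm, norm_mul, neg_mul]
  simp only [mulVec, dotProduct]
  rw [← Finset.add_sum_erase _ _ (Finset.mem_univ i),
    ← Finset.add_sum_erase _ _ (Finset.mem_univ i), hoff, omegaComp_apply_self, ← sub_eq_add_neg]
  calc wlin ω (M i i) * ‖x i‖ - ∑ j ∈ Finset.univ.erase i, ‖M i j * x j‖
      ≤ ‖M i i * x i‖ - ‖∑ j ∈ Finset.univ.erase i, M i j * x j‖ := by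
        rw [norm_mul]
        exact sub_le_sub (mul_le_mul_of_nonneg_right (wlin_le_norm hω _) (norm_nonneg _))
          (norm_sum_le _ _)
    _ ≤ _ := norm_sub_le_norm_add _ _

theorem omegaComp_sub_le (hω : ω ∈ Set.Icc (0 : ℝ) 1) {Et Gt : Matrix N N ℝ}
    {E G : Matrix N N ℂ} (hE : ∀ i j, Et i j ≤ omegaComp ω E i j)
    (hG : ∀ i j, ‖G i j‖ ≤ Gt i j) : ∀ i j, (Et - Gt) i j ≤ omegaComp ω (E - G) i j := by
  intro i j
  rcases eq_or_ne i j with rfl | h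
  · have hEi := hE i i
    rw [omegaComp_apply_self] at hEi
    rw [omegaComp_apply_self, Matrix.sub_apply, Matrix.sub_apply, wlin_sub]
    linarith [hG i i, wlin_le_norm hω (G i i)]
  · have hEij := hE i j
    rw [omegaComp_apply_of_ne ω E h] at hEij
    rw [omegaComp_apply_of_ne ω _ h, Matrix.sub_apply, Matrix.sub_apply]
    linarith [hG i j, norm_sub_le (E i j) (G i j)]

end OmegaComparison

section MMatrix

variable {N : Type*} {M : Matrix N N ℝ} {x u : N → ℝ}

theorem IsZMatrix.transpose (hM : IsZMatrix M) : IsZMatrix Mᵀ := fun i j h => hM j i h.symm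

theorem IsZMatrix.sub {G : Matrix N N ℝ} (hM : IsZMatrix M) (hG : ∀ i j, 0 ≤ G i j) :
    IsZMatrix (M - G) := fun i j h => by
  rw [Matrix.sub_apply]; linarith [hM i j h, hG i j]

variable [Fintype N]

theorem IsNonsingMMatrix.isZMatrix (hM : IsNonsingMMatrix M) : IsZMatrix M := hM.1

theorem IsZMatrix.mulVec_apply_nonpos (hM : IsZMatrix M) (hx : ∀ j, 0 ≤ x j) {k : N}
    (hk : x k = 0) : (M *ᵥ x) k ≤ 0 := by
  classical
  rw [mulVec, dotProduct, ← Finset.add_sum_erase _ _ (Finset.mem_univ k), hk, mul_zero, zero_add]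
  exact Finset.sum_nonpos fun j hj =>
    mul_nonpos_of_nonpos_of_nonneg (hM k j (Finset.ne_of_mem_erase hj).symm) (hx j)

theorem IsZMatrix.pos_of_mulVec_pos (hM : IsZMatrix M) (hx : ∀ i, 0 ≤ x i)
    (hMx : ∀ i, 0 < (M *ᵥ x) i) : ∀ i, 0 < x i :=
  fun k => (hx k).lt_of_ne' fun hk => (hMx k).not_ge (hM.mulVec_apply_nonpos hx hk)

theorem IsZMatrix.isNonsingMMatrix (hM : IsZMatrix M) (hu : ∀ i, 0 ≤ u i)
    (hMu : ∀ i, 0 < (M *ᵥ u) i) : IsNonsingMMatrix M :=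
  ⟨hM, u, hM.pos_of_mulVec_pos hu hMu, hMu⟩

theorem IsNonsingMMatrix.nonneg_of_mulVec_nonneg (hM : IsNonsingMMatrix M)
    (hx : ∀ i, 0 ≤ (M *ᵥ x) i) : ∀ i, 0 ≤ x i := by
  obtain ⟨hZ, u, hu, hMu⟩ := hM
  by_contra! hneg
  obtain ⟨i₀, hi₀⟩ := hneg
  -- `t` is the least multiple of `u` making `x + t • u` nonnegative; it vanishes at `k`
  obtain ⟨k, -, hk⟩ :=
    Finset.exists_max_image Finset.univ (fun i => -x i / u i) ⟨i₀, Finset.mem_univ _⟩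
  set t := -x k / u k
  have ht : 0 < t :=
    (div_pos (neg_pos.2 hi₀) (hu i₀)).trans_le (hk i₀ (Finset.mem_univ _))
  have hy : ∀ i, 0 ≤ (x + t • u) i := fun i => by
    have := (div_le_iff₀ (hu i)).1 (hk i (Finset.mem_univ _))
    simp only [Pi.add_apply, Pi.smul_apply, smul_eq_mul]
    linarith
  have hyk : (x + t • u) k = 0 := by
    simp only [Pi.add_apply, Pi.smul_apply, smul_eq_mul, t]
    field_simp [(hu k).ne']
    ring
  have := IsZMatrix.mulVec_apply_nonpos hZ hy hyk
  rw [mulVec_add, mulVec_smul, Pi.add_apply, Pi.smul_apply, smul_eq_mul] at this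
  linarith [hx k, mul_pos ht (hMu k)]

theorem IsNonsingMMatrix.mulVec_injective (hM : IsNonsingMMatrix M) :
    Function.Injective M.mulVec := by
  have h : ∀ z : N → ℝ, M *ᵥ z = 0 → ∀ i, 0 ≤ z i := fun z hz =>
    hM.nonneg_of_mulVec_nonneg fun i => by simp [hz]
  intro x y hxy
  funext i
  have h₁ := h (x - y) (by rw [mulVec_sub, hxy, sub_self]) i
  have h₂ := h (y - x) (by rw [mulVec_sub, hxy, sub_self]) i
  simp only [Pi.sub_apply] at h₁ h₂
  linarith

theorem IsNonsingMMatrix.transpose (hM : IsNonsingMMatrix M) : IsNonsingMMatrix Mᵀ := by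
  classical
  have hdet : IsUnit M.det :=
    (isUnit_iff_isUnit_det M).1 (mulVec_injective_iff_isUnit.1 hM.mulVec_injective)
  have hinv : ∀ i j, 0 ≤ M⁻¹ i j := fun i j => by
    have h := hM.nonneg_of_mulVec_nonneg (x := M⁻¹ *ᵥ Pi.single j 1) fun k => by
      rw [mulVec_mulVec, mul_nonsing_inv _ hdet, one_mulVec]
      by_cases hk : k = j <;> simp [hk]
    simpa [mulVec_single] using h i
  refine hM.isZMatrix.transpose.isNonsingMMatrix (u := 1 ᵥ* M⁻¹)
    (fun i => Finset.sum_nonneg fun j _ => by simpa using hinv j i) fun i => ?_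
  rw [mulVec_transpose, vecMul_vecMul, nonsing_inv_mul _ hdet, vecMul_one]
  exact one_pos

theorem IsNonsingMMatrix.norm_le_of_mulVec_le [DecidableEq N] {ω : ℝ}
    (hω : ω ∈ Set.Icc (0 : ℝ) 1) {Mc : Matrix N N ℂ} (hM : IsNonsingMMatrix M)
    (hle : ∀ i j, M i j ≤ omegaComp ω Mc i j) {x : N → ℂ} {y : N → ℝ}
    (h : ∀ i, ‖(Mc *ᵥ x) i‖ ≤ (M *ᵥ y) i) : ∀ i, ‖x i‖ ≤ y i := by
  have hx : ∀ i, (M *ᵥ fun j => ‖x j‖) i ≤ ‖(Mc *ᵥ x) i‖ := fun i =>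
    (Finset.sum_le_sum fun j _ => mul_le_mul_of_nonneg_right (hle i j) (norm_nonneg _)).trans
      (omegaComp_mulVec_norm_le hω Mc x i)
  have := hM.nonneg_of_mulVec_nonneg (x := y - fun j => ‖x j‖) fun i => by
    rw [mulVec_sub, Pi.sub_apply]
    linarith [hx i, h i]
  intro i
  linarith [this i, show (y - fun j => ‖x j‖) i = y i - ‖x i‖ from rfl]

end MMatrix

section Sylvester

variable {a b : Type*} [DecidableEq a] [DecidableEq b]

theorem sylvester_apply {R : Type*} [Semiring R] (E : Matrix a a R) (F : Matrix b b R)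
    (j j' : b) (i i' : a) : sylvester E F (j, i) (j', i') =
      (if j = j' then E i i' else 0) + if i = i' then F j' j else 0 := by
  simp [sylvester, one_apply]

theorem isZMatrix_sylvester {E : Matrix a a ℝ} {F : Matrix b b ℝ} (hE : IsZMatrix E)
    (hF : IsZMatrix F) : IsZMatrix (sylvester E F) := by
  rintro ⟨j, i⟩ ⟨j', i'⟩ h
  rw [sylvester_apply]
  by_cases hj : j = j'
  · subst hj
    have hi : i ≠ i' := fun hi => h (by rw [hi])
    simpa [hi] using hE i i' hi
  · by_cases hi : i = i' <;> simp [hj, hi, hF j' j (Ne.symm hj)]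

theorem sylvester_le_omegaComp_sylvester {ω : ℝ} {Et : Matrix a a ℝ} {Ft : Matrix b b ℝ}
    {E : Matrix a a ℂ} {F : Matrix b b ℂ} (hE : ∀ i j, Et i j ≤ omegaComp ω E i j)
    (hF : ∀ i j, Ft i j ≤ omegaComp ω F i j) :
    ∀ I J, sylvester Et Ft I J ≤ omegaComp ω (sylvester E F) I J := by
  rintro ⟨j, i⟩ ⟨j', i'⟩
  by_cases h : (j, i) = (j', i')
  · obtain ⟨rfl, rfl⟩ := Prod.ext_iff.1 h
    have hEi := hE i i
    have hFj := hF j j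
    rw [omegaComp_apply_self] at hEi hFj
    rw [omegaComp_apply_self, sylvester_apply, sylvester_apply]
    simp only [if_true]
    rw [wlin_add]
    linarith
  rw [omegaComp_apply_of_ne ω _ h, sylvester_apply, sylvester_apply]
  by_cases hj : j = j'
  · subst hj
    have hi : i ≠ i' := fun hi => h (by rw [hi])
    simpa [hi, omegaComp_apply_of_ne ω E hi] using hE i i'
  · by_cases hi : i = i'
    · subst hi
      simpa [hj, omegaComp_apply_of_ne ω F (Ne.symm hj)] using hF j' j
    · simp [hj, hi]

variable [Fintype a] [Fintype b]

theorem sylvester_mulVec_vec {R : Type*} [CommSemiring R] (E : Matrix a a R) (F : Matrix b b R)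
    (X : Matrix a b R) : sylvester E F *ᵥ vec X = vec (E * X + X * F) := by
  rw [sylvester, add_mulVec, vec_add, ← vec_mul_eq_mulVec, kronecker_mulVec_vec,
    transpose_transpose, Matrix.one_mul]

theorem isNonsingMMatrix_sylvester {E : Matrix a a ℝ} {F : Matrix b b ℝ}
    (hE : IsNonsingMMatrix E) (hF : IsNonsingMMatrix F) : IsNonsingMMatrix (sylvester E F) := by
  obtain ⟨hEZ, u, hu, hEu⟩ := hE
  obtain ⟨-, v, hv, hFv⟩ := hF.transpose
  refine ⟨isZMatrix_sylvester hEZ hF.isZMatrix, vec (vecMulVec u v),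
    fun ⟨j, i⟩ => mul_pos (hu i) (hv j), ?_⟩
  rintro ⟨j, i⟩
  rw [sylvester_mulVec_vec, mul_vecMulVec, vecMulVec_mul, ← mulVec_transpose]
  exact add_pos (mul_pos (hEu i) (hv j)) (mul_pos (hu i) (hFv j))

theorem IsNonsingMMatrix.nonneg_of_sylvester {E : Matrix a a ℝ} {F : Matrix b b ℝ}
    (hM : IsNonsingMMatrix (sylvester E F)) {X : Matrix a b ℝ}
    (h : ∀ i j, 0 ≤ (E * X + X * F) i j) : ∀ i j, 0 ≤ X i j := fun i j =>
  hM.nonneg_of_mulVec_nonneg (x := vec X)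
    (fun ⟨j', i'⟩ => by rw [sylvester_mulVec_vec]; exact h i' j') (j, i)

theorem IsNonsingMMatrix.norm_le_of_sylvester {ω : ℝ} (hω : ω ∈ Set.Icc (0 : ℝ) 1)
    {Et : Matrix a a ℝ} {Ft : Matrix b b ℝ} {E : Matrix a a ℂ} {F : Matrix b b ℂ}
    (hM : IsNonsingMMatrix (sylvester Et Ft))
    (hle : ∀ I J, sylvester Et Ft I J ≤ omegaComp ω (sylvester E F) I J)
    {X : Matrix a b ℂ} {Xt : Matrix a b ℝ}
    (h : ∀ i j, ‖(E * X + X * F) i j‖ ≤ (Et * Xt + Xt * Ft) i j) : ∀ i j, ‖X i j‖ ≤ Xt i j :=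
  fun i j => hM.norm_le_of_mulVec_le hω hle (x := vec X) (y := vec Xt)
    (fun ⟨j', i'⟩ => by rw [sylvester_mulVec_vec, sylvester_mulVec_vec]; exact h i' j') (j, i)

end Sylvester

section Entrywise

variable {l m n : Type*} [Fintype m]

theorem mul_apply_nonneg {X : Matrix l m ℝ} {Y : Matrix m n ℝ} (hX : ∀ i j, 0 ≤ X i j)
    (hY : ∀ i j, 0 ≤ Y i j) (i : l) (k : n) : 0 ≤ (X * Y) i k :=
  Finset.sum_nonneg fun j _ => mul_nonneg (hX i j) (hY j k)

theorem mulVec_apply_nonneg {X : Matrix l m ℝ} {v : m → ℝ} (hX : ∀ i j, 0 ≤ X i j)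
    (hv : ∀ j, 0 ≤ v j) (i : l) : 0 ≤ (X *ᵥ v) i :=
  Finset.sum_nonneg fun j _ => mul_nonneg (hX i j) (hv j)

theorem norm_mul_apply_le {𝕜 : Type*} [SeminormedRing 𝕜] {X : Matrix l m 𝕜} {Y : Matrix m n 𝕜}
    {Xt : Matrix l m ℝ} {Yt : Matrix m n ℝ} (hX : ∀ i j, ‖X i j‖ ≤ Xt i j)
    (hY : ∀ i j, ‖Y i j‖ ≤ Yt i j) (i : l) (k : n) : ‖(X * Y) i k‖ ≤ (Xt * Yt) i k :=
  (norm_sum_le _ _).trans <| Finset.sum_le_sum fun j _ => (norm_mul_le _ _).trans <|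
    mul_le_mul (hX i j) (hY j k) (norm_nonneg _) ((norm_nonneg _).trans (hX i j))

theorem exists_tendsto_of_monotone_of_le {X : ℕ → Matrix l n ℝ} {Z : Matrix l n ℝ}
    (hmono : ∀ k i j, X k i j ≤ X (k + 1) i j) (hle : ∀ k i j, X k i j ≤ Z i j) :
    ∃ L, Tendsto X atTop (𝓝 L) ∧ ∀ i j, (∀ k, X k i j ≤ L i j) ∧ L i j ≤ Z i j := by
  have hbdd : ∀ i j, BddAbove (Set.range fun k => X k i j) := fun i j =>
    ⟨Z i j, Set.forall_mem_range.2 fun k => hle k i j⟩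
  refine ⟨of fun i j => ⨆ k, X k i j, tendsto_pi_nhds.2 fun i => tendsto_pi_nhds.2 fun j =>
    tendsto_atTop_ciSup (monotone_nat_of_le_succ fun k => hmono k i j) (hbdd i j),
    fun i j => ⟨fun k => le_ciSup (hbdd i j) k, ciSup_le fun k => hle k i j⟩⟩

end Entrywise

section Blocks

variable {m n : Type*} {A : Matrix m m ℝ} {B : Matrix m n ℝ} {C : Matrix n m ℝ} {D : Matrix n n ℝ}

theorem IsZMatrix.of_fromBlocks (hQ : IsZMatrix (fromBlocks D (-C) (-B) A)) :
    IsZMatrix A ∧ (∀ i j, 0 ≤ B i j) ∧ (∀ i j, 0 ≤ C i j) ∧ IsZMatrix D := by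
  refine ⟨fun i j h => ?_, fun i j => ?_, fun i j => ?_, fun i j h => ?_⟩
  · simpa using hQ (Sum.inr i) (Sum.inr j) (by simpa using h)
  · simpa using hQ (Sum.inr i) (Sum.inl j) (by simp)
  · simpa using hQ (Sum.inl i) (Sum.inr j) (by simp)
  · simpa using hQ (Sum.inl i) (Sum.inl j) (by simpa using h)

theorem IsNonsingMMatrix.exists_pos_fromBlocks [Fintype m] [Fintype n]
    (hQ : IsNonsingMMatrix (fromBlocks D (-C) (-B) A)) :
    ∃ (p : n → ℝ) (r : m → ℝ), (∀ j, 0 < p j) ∧ (∀ i, 0 < r i) ∧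
      (∀ j, (C *ᵥ r) j < (D *ᵥ p) j) ∧ ∀ i, (B *ᵥ p) i < (A *ᵥ r) i := by
  obtain ⟨-, w, hw, hQw⟩ := hQ
  refine ⟨w ∘ Sum.inl, w ∘ Sum.inr, fun j => hw _, fun i => hw _, fun j => ?_, fun i => ?_⟩
  · simpa [fromBlocks_mulVec, neg_mulVec, ← sub_eq_add_neg] using hQw (Sum.inl j)
  · simpa [fromBlocks_mulVec, neg_mulVec, ← sub_eq_add_neg] using hQw (Sum.inr i)

theorem le_omegaComp_of_fromBlocks_le [DecidableEq m] [DecidableEq n] {ω : ℝ}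
    {Ac : Matrix m m ℂ} {Bc : Matrix m n ℂ} {Cc : Matrix n m ℂ} {Dc : Matrix n n ℂ}
    (h : ∀ I J, fromBlocks D (-C) (-B) A I J ≤ omegaComp ω (fromBlocks Dc (-Cc) (-Bc) Ac) I J) :
    (∀ i j, A i j ≤ omegaComp ω Ac i j) ∧ (∀ i j, ‖Bc i j‖ ≤ B i j) ∧
      (∀ i j, ‖Cc i j‖ ≤ C i j) ∧ ∀ i j, D i j ≤ omegaComp ω Dc i j := by
  refine ⟨fun i j => ?_, fun i j => ?_, fun i j => ?_, fun i j => ?_⟩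
  · simpa [omegaComp] using h (Sum.inr i) (Sum.inr j)
  · simpa [omegaComp] using h (Sum.inr i) (Sum.inl j)
  · simpa [omegaComp] using h (Sum.inl i) (Sum.inr j)
  · simpa [omegaComp] using h (Sum.inl i) (Sum.inl j)

end Blocks

section Riccati

variable {m n α : Type*} [Fintype m] [Fintype n] [Ring α] {A : Matrix m m α}
  {B : Matrix m n α} {C : Matrix n m α} {D : Matrix n n α} {P P' : Matrix m n α}

theorem IsNewtonStep.sylvester_sub (h : IsNewtonStep A B C D P P') (X : Matrix m n α) :
    (A - P * C) * (X - P') + (X - P') * (D - C * P) =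
      (X - P) * C * (X - P) - riccati A B C D X :=
  calc _ = (X - P) * C * (X - P) - riccati A B C D X -
        ((A - P * C) * P' + P' * (D - C * P) - (B - P * C * P)) := by
        simp only [riccati, Matrix.sub_mul, Matrix.mul_sub, Matrix.mul_assoc]; abel
    _ = _ := by rw [h, sub_self, sub_zero]

theorem IsNewtonStep.riccati_eq (h : IsNewtonStep A B C D P P') :
    riccati A B C D P' = (P' - P) * C * (P' - P) := by
  have := h.sylvester_sub P'
  rw [sub_self, Matrix.mul_zero, Matrix.zero_mul, add_zero] at this
  exact (sub_eq_zero.1 this.symm).symm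

theorem IsNewtonStep.sylvester_sub_self (h : IsNewtonStep A B C D P P') :
    (A - P * C) * (P' - P) + (P' - P) * (D - C * P) = riccati A B C D P := by
  have := h.sylvester_sub P
  rw [sub_self, Matrix.zero_mul, Matrix.zero_mul, zero_sub] at this
  rw [← neg_sub P, Matrix.mul_neg, Matrix.neg_mul, ← neg_add, this, neg_neg]

theorem sub_mul_mulVec_sub_mulVec (p : n → α) (r : m → α) :
    (A - P * C) *ᵥ (r - P *ᵥ p) =
      (A *ᵥ r - B *ᵥ p) + P *ᵥ (D *ᵥ p - C *ᵥ r) + riccati A B C D P *ᵥ p := by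
  simp only [riccati, sub_mulVec, mulVec_sub, add_mulVec, ← mulVec_mulVec]
  abel

theorem IsNewtonStep.sub_mul_mulVec_sub_mulVec (h : IsNewtonStep A B C D P P') (p : n → α)
    (r : m → α) : (A - P * C) *ᵥ (r - P' *ᵥ p) =
      (A *ᵥ r - B *ᵥ p) + P' *ᵥ (D *ᵥ p - C *ᵥ r) + ((P' - P) * C) *ᵥ (r - P *ᵥ p) := by
  rw [mulVec_sub (A - P * C), mulVec_mulVec, eq_sub_of_add_eq h]
  simp only [sub_mulVec, mulVec_sub, ← mulVec_mulVec]
  abel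

theorem riccati_eq_zero_of_tendsto [TopologicalSpace α] [IsTopologicalRing α] [T2Space α]
    {X : ℕ → Matrix m n α} {L : Matrix m n α} (h : ∀ k, IsNewtonStep A B C D (X k) (X (k + 1)))
    (hX : Tendsto X atTop (𝓝 L)) : riccati A B C D L = 0 := by
  have hX' := hX.comp (tendsto_add_atTop_nat 1)
  have hR : Continuous (riccati A B C D) := by unfold riccati; fun_prop
  have hsq : Continuous fun q : Matrix m n α × Matrix m n α => (q.2 - q.1) * C * (q.2 - q.1) := by
    fun_prop
  have h₁ := (hR.tendsto L).comp hX'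
  have h₂ := (hsq.tendsto (L, L)).comp (hX.prodMk_nhds hX')
  rw [sub_self, Matrix.zero_mul, Matrix.zero_mul] at h₂
  exact tendsto_nhds_unique (h₁.congr fun k => (h k).riccati_eq) h₂

end Riccati

section RealNewton

variable {m n : Type*} [Fintype m] [Fintype n]
  {A : Matrix m m ℝ} {B : Matrix m n ℝ} {C : Matrix n m ℝ} {D : Matrix n n ℝ}
  {Φ P P' : Matrix m n ℝ} {p : n → ℝ} {r : m → ℝ}

/-- Invariant of the real Newton iterates, for a positive witness `(p, r)` of the block M-matrix:
it makes `r - P *ᵥ p` and `p` witnesses that `A - P * C` and `D - C * P` are nonsingular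
M-matrices. -/
structure IsNewtonAdmissible (A : Matrix m m ℝ) (B : Matrix m n ℝ) (C : Matrix n m ℝ)
    (D : Matrix n n ℝ) (Φ : Matrix m n ℝ) (p : n → ℝ) (r : m → ℝ) (P : Matrix m n ℝ) : Prop where
  nonneg : ∀ i j, 0 ≤ P i j
  le : ∀ i j, P i j ≤ Φ i j
  riccati_nonneg : ∀ i j, 0 ≤ riccati A B C D P i j
  mulVec_le : ∀ i, (P *ᵥ p) i ≤ r i

theorem isNewtonAdmissible_zero (hB : ∀ i j, 0 ≤ B i j) (hΦ : ∀ i j, 0 ≤ Φ i j)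
    (hr : ∀ i, 0 ≤ r i) : IsNewtonAdmissible A B C D Φ p r 0 :=
  ⟨fun _ _ => le_rfl, hΦ, by simpa [riccati] using hB, by simpa using hr⟩

namespace IsNewtonAdmissible

theorem isNonsingMMatrix_leftCoeff (hP : IsNewtonAdmissible A B C D Φ p r P) (hA : IsZMatrix A)
    (hC : ∀ i j, 0 ≤ C i j) (hp : ∀ j, 0 ≤ p j) (hpr : ∀ j, (C *ᵥ r) j ≤ (D *ᵥ p) j)
    (hrp : ∀ i, (B *ᵥ p) i < (A *ᵥ r) i) : IsNonsingMMatrix (A - P * C) := by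
  refine (hA.sub (mul_apply_nonneg hP.nonneg hC)).isNonsingMMatrix (u := r - P *ᵥ p)
    (fun i => sub_nonneg.2 (hP.mulVec_le i)) fun i => ?_
  rw [sub_mul_mulVec_sub_mulVec (B := B) (D := D)]
  have h₁ := mulVec_apply_nonneg hP.nonneg (v := D *ᵥ p - C *ᵥ r) (fun j => sub_nonneg.2 (hpr j)) i
  have h₂ := mulVec_apply_nonneg hP.riccati_nonneg hp i
  simp only [Pi.add_apply, Pi.sub_apply] at h₁ h₂ ⊢
  linarith [hrp i]

theorem isNonsingMMatrix_rightCoeff (hP : IsNewtonAdmissible A B C D Φ p r P) (hD : IsZMatrix D)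
    (hC : ∀ i j, 0 ≤ C i j) (hp : ∀ j, 0 < p j) (hpr : ∀ j, (C *ᵥ r) j < (D *ᵥ p) j) :
    IsNonsingMMatrix (D - C * P) := by
  refine ⟨hD.sub (mul_apply_nonneg hC hP.nonneg), p, hp, fun j => ?_⟩
  have h : (D - C * P) *ᵥ p = (D *ᵥ p - C *ᵥ r) + C *ᵥ (r - P *ᵥ p) := by
    simp only [sub_mulVec, mulVec_sub, ← mulVec_mulVec]; abel
  have h₁ := mulVec_apply_nonneg hC (v := r - P *ᵥ p) (fun i => sub_nonneg.2 (hP.mulVec_le i)) j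
  rw [h, Pi.add_apply, Pi.sub_apply]
  linarith [hpr j]

theorem isNonsingMMatrix_sylvester [DecidableEq m] [DecidableEq n]
    (hP : IsNewtonAdmissible A B C D Φ p r P) (hA : IsZMatrix A)
    (hD : IsZMatrix D) (hC : ∀ i j, 0 ≤ C i j) (hp : ∀ j, 0 < p j)
    (hpr : ∀ j, (C *ᵥ r) j < (D *ᵥ p) j) (hrp : ∀ i, (B *ᵥ p) i < (A *ᵥ r) i) :
    IsNonsingMMatrix (sylvester (A - P * C) (D - C * P)) :=
  _root_.isNonsingMMatrix_sylvester
    (hP.isNonsingMMatrix_leftCoeff hA hC (fun j => (hp j).le) (fun j => (hpr j).le) hrp)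
    (hP.isNonsingMMatrix_rightCoeff hD hC hp hpr)

theorem step [DecidableEq m] [DecidableEq n]
    (hP : IsNewtonAdmissible A B C D Φ p r P) (hA : IsZMatrix A)
    (hD : IsZMatrix D) (hC : ∀ i j, 0 ≤ C i j) (hp : ∀ j, 0 < p j)
    (hpr : ∀ j, (C *ᵥ r) j < (D *ᵥ p) j) (hrp : ∀ i, (B *ᵥ p) i < (A *ᵥ r) i)
    (hΦ : riccati A B C D Φ = 0) (h : IsNewtonStep A B C D P P') :
    IsNewtonAdmissible A B C D Φ p r P' ∧ ∀ i j, P i j ≤ P' i j := by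
  have hM := hP.isNonsingMMatrix_sylvester hA hD hC hp hpr hrp
  have hinc : ∀ i j, 0 ≤ (P' - P) i j := hM.nonneg_of_sylvester fun i j => by
    rw [h.sylvester_sub_self]; exact hP.riccati_nonneg i j
  have hmono : ∀ i j, P i j ≤ P' i j := fun i j => by simpa using hinc i j
  have hΦP : ∀ i j, 0 ≤ (Φ - P) i j := fun i j => by simpa using hP.le i j
  have hgap : ∀ i j, 0 ≤ (Φ - P') i j := hM.nonneg_of_sylvester fun i j => by
    rw [h.sylvester_sub, hΦ, sub_zero]; exact mul_apply_nonneg (mul_apply_nonneg hΦP hC) hΦP i j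
  have hP'0 : ∀ i j, 0 ≤ P' i j := fun i j => (hP.nonneg i j).trans (hmono i j)
  have hwit : ∀ i, 0 ≤ (r - P' *ᵥ p) i :=
    (hP.isNonsingMMatrix_leftCoeff hA hC (fun j => (hp j).le) (fun j => (hpr j).le)
      hrp).nonneg_of_mulVec_nonneg fun i => by
        have h₁ := mulVec_apply_nonneg hP'0 (v := D *ᵥ p - C *ᵥ r)
          (fun j => sub_nonneg.2 (hpr j).le) i
        have h₂ := mulVec_apply_nonneg (mul_apply_nonneg hinc hC) (v := r - P *ᵥ p)
          (fun i => sub_nonneg.2 (hP.mulVec_le i)) i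
        rw [h.sub_mul_mulVec_sub_mulVec, Pi.add_apply, Pi.add_apply, Pi.sub_apply]
        linarith [hrp i]
  refine ⟨⟨hP'0, fun i j => by simpa using hgap i j,
    fun i j => ?_, fun i => by simpa using hwit i⟩, hmono⟩
  rw [h.riccati_eq]
  exact mul_apply_nonneg (mul_apply_nonneg hinc hC) hinc i j

end IsNewtonAdmissible

theorem tendsto_newton_of_isNonsingMMatrix [DecidableEq m] [DecidableEq n]
    (hQ : IsNonsingMMatrix (fromBlocks D (-C) (-B) A)) (hΦ0 : ∀ i j, 0 ≤ Φ i j)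
    (hΦ : riccati A B C D Φ = 0)
    (hΦmin : ∀ Z : Matrix m n ℝ, (∀ i j, 0 ≤ Z i j) → riccati A B C D Z = 0 → ∀ i j, Φ i j ≤ Z i j)
    {X : ℕ → Matrix m n ℝ} (hX0 : X 0 = 0) (hX : ∀ k, IsNewtonStep A B C D (X k) (X (k + 1))) :
    (∀ k, IsNonsingMMatrix (sylvester (A - X k * C) (D - C * X k))) ∧
      Tendsto X atTop (𝓝 Φ) := by
  obtain ⟨hA, hB, hC, hD⟩ := hQ.isZMatrix.of_fromBlocks
  obtain ⟨p, r, hp, hr, hpr, hrp⟩ := hQ.exists_pos_fromBlocks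
  have hadm : ∀ k, IsNewtonAdmissible A B C D Φ p r (X k) := by
    intro k
    induction k with
    | zero => rw [hX0]; exact isNewtonAdmissible_zero hB hΦ0 fun i => (hr i).le
    | succ k ih => exact (ih.step hA hD hC hp hpr hrp hΦ (hX k)).1
  refine ⟨fun k => (hadm k).isNonsingMMatrix_sylvester hA hD hC hp hpr hrp, ?_⟩
  obtain ⟨L, hL, hLbd⟩ := exists_tendsto_of_monotone_of_le
    (fun k => ((hadm k).step hA hD hC hp hpr hrp hΦ (hX k)).2) fun k => (hadm k).le
  have hL0 : ∀ i j, 0 ≤ L i j := fun i j => by simpa [hX0] using (hLbd i j).1 0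
  have hΦL := hΦmin L hL0 (riccati_eq_zero_of_tendsto hX hL)
  rwa [show L = Φ from Matrix.ext fun i j => le_antisymm (hLbd i j).2 (hΦL i j)] at hL

end RealNewton

section ComplexNewton

variable {m n : Type*} [Fintype m] [Fintype n] [DecidableEq m] [DecidableEq n] {ω : ℝ}
  {A : Matrix m m ℂ} {B : Matrix m n ℂ} {C : Matrix n m ℂ} {D : Matrix n n ℂ}
  {At : Matrix m m ℝ} {Bt : Matrix m n ℝ} {Ct : Matrix n m ℝ} {Dt : Matrix n n ℝ}

theorem IsNonsingMMatrix.norm_le_of_newton (hω : ω ∈ Set.Icc (0 : ℝ) 1)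
    (hle : ∀ I J, fromBlocks Dt (-Ct) (-Bt) At I J ≤ omegaComp ω (fromBlocks D (-C) (-B) A) I J)
    {P X : Matrix m n ℂ} {Pt Xt : Matrix m n ℝ} (hP : ∀ i j, ‖P i j‖ ≤ Pt i j)
    (hM : IsNonsingMMatrix (sylvester (At - Pt * Ct) (Dt - Ct * Pt)))
    (h : ∀ i j, ‖((A - P * C) * X + X * (D - C * P)) i j‖ ≤
      ((At - Pt * Ct) * Xt + Xt * (Dt - Ct * Pt)) i j) :
    ∀ i j, ‖X i j‖ ≤ Xt i j := by
  obtain ⟨hA, -, hC, hD⟩ := le_omegaComp_of_fromBlocks_le hle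
  exact hM.norm_le_of_sylvester hω (sylvester_le_omegaComp_sylvester
    (omegaComp_sub_le hω hA (norm_mul_apply_le hP hC))
    (omegaComp_sub_le hω hD (norm_mul_apply_le hC hP))) h

theorem norm_newton_le (hω : ω ∈ Set.Icc (0 : ℝ) 1)
    (hle : ∀ I J, fromBlocks Dt (-Ct) (-Bt) At I J ≤ omegaComp ω (fromBlocks D (-C) (-B) A) I J)
    {X : ℕ → Matrix m n ℂ} {Xt : ℕ → Matrix m n ℝ}
    (hM : ∀ k, IsNonsingMMatrix (sylvester (At - Xt k * Ct) (Dt - Ct * Xt k)))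
    (hX0 : X 0 = 0) (hX : ∀ k, IsNewtonStep A B C D (X k) (X (k + 1)))
    (hXt0 : Xt 0 = 0) (hXt : ∀ k, IsNewtonStep At Bt Ct Dt (Xt k) (Xt (k + 1))) :
    ∀ k i j, ‖X k i j‖ ≤ Xt k i j := by
  obtain ⟨-, hB, hC, -⟩ := le_omegaComp_of_fromBlocks_le hle
  suffices ∀ k, (∀ i j, ‖X k i j‖ ≤ Xt k i j) ∧
      ∀ i j, ‖riccati A B C D (X k) i j‖ ≤ riccati At Bt Ct Dt (Xt k) i j from
    fun k => (this k).1
  intro k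
  induction k with
  | zero => rw [hX0, hXt0]; exact ⟨by simp, by simpa [riccati] using hB⟩
  | succ k ih =>
    have hinc := (hM k).norm_le_of_newton hω hle ih.1 fun i j => by
      rw [(hX k).sylvester_sub_self, (hXt k).sylvester_sub_self]; exact ih.2 i j
    refine ⟨fun i j => ?_, fun i j => ?_⟩
    · calc ‖X (k + 1) i j‖ = ‖X k i j + (X (k + 1) - X k) i j‖ := by
            rw [Matrix.sub_apply, add_sub_cancel]
        _ ≤ Xt k i j + (Xt (k + 1) - Xt k) i j :=
            (norm_add_le _ _).trans (add_le_add (ih.1 i j) (hinc i j))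
        _ = Xt (k + 1) i j := by rw [Matrix.sub_apply, add_sub_cancel]
    · rw [(hX k).riccati_eq, (hXt k).riccati_eq]
      exact norm_mul_apply_le (norm_mul_apply_le hinc hC) hinc i j

theorem norm_sub_newton_le (hω : ω ∈ Set.Icc (0 : ℝ) 1)
    (hle : ∀ I J, fromBlocks Dt (-Ct) (-Bt) At I J ≤ omegaComp ω (fromBlocks D (-C) (-B) A) I J)
    {X : ℕ → Matrix m n ℂ} {Xt : ℕ → Matrix m n ℝ}
    (hM : ∀ k, IsNonsingMMatrix (sylvester (At - Xt k * Ct) (Dt - Ct * Xt k)))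
    (hX0 : X 0 = 0) (hX : ∀ k, IsNewtonStep A B C D (X k) (X (k + 1)))
    (hXt0 : Xt 0 = 0) (hXt : ∀ k, IsNewtonStep At Bt Ct Dt (Xt k) (Xt (k + 1)))
    {Φ : Matrix m n ℂ} {Φt : Matrix m n ℝ} (hΦ : riccati A B C D Φ = 0)
    (hΦt : riccati At Bt Ct Dt Φt = 0) (hΦle : ∀ i j, ‖Φ i j‖ ≤ Φt i j) :
    ∀ k i j, ‖(Φ - X k) i j‖ ≤ (Φt - Xt k) i j := by
  obtain ⟨-, -, hC, -⟩ := le_omegaComp_of_fromBlocks_le hle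
  intro k
  induction k with
  | zero => rw [hX0, hXt0, sub_zero, sub_zero]; exact hΦle
  | succ k ih =>
    refine (hM k).norm_le_of_newton hω hle (norm_newton_le hω hle hM hX0 hX hXt0 hXt k)
      fun i j => ?_
    rw [(hX k).sylvester_sub, (hXt k).sylvester_sub, hΦ, hΦt, sub_zero, sub_zero]
    exact norm_mul_apply_le (norm_mul_apply_le ih hC) ih i j

end ComplexNewton

theorem stmt8_general {m n : ℕ} (ω : ℝ) (hω : ω ∈ Set.Icc (0 : ℝ) 1)
    (A : Matrix (Fin m) (Fin m) ℂ) (B : Matrix (Fin m) (Fin n) ℂ)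
    (C : Matrix (Fin n) (Fin m) ℂ) (D : Matrix (Fin n) (Fin n) ℂ)
    (At : Matrix (Fin m) (Fin m) ℝ) (Bt : Matrix (Fin m) (Fin n) ℝ)
    (Ct : Matrix (Fin n) (Fin m) ℝ) (Dt : Matrix (Fin n) (Fin n) ℝ)
    (hQt : IsNonsingMMatrix (Matrix.fromBlocks Dt (-Ct) (-Bt) At))
    (hQtle : ∀ i j, Matrix.fromBlocks Dt (-Ct) (-Bt) At i j ≤
      omegaComp ω (Matrix.fromBlocks D (-C) (-B) A) i j)
    (Φt : Matrix (Fin m) (Fin n) ℝ)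
    (hΦtPos : ∀ i j, 0 ≤ Φt i j)
    (hΦtSol : Φt * Ct * Φt - Φt * Dt - At * Φt + Bt = 0)
    (hΦtMin : ∀ Z : Matrix (Fin m) (Fin n) ℝ, (∀ i j, 0 ≤ Z i j) →
      Z * Ct * Z - Z * Dt - At * Z + Bt = 0 → ∀ i j, Φt i j ≤ Z i j)
    (Φ : Matrix (Fin m) (Fin n) ℂ)
    (hΦSol : Φ * C * Φ - Φ * D - A * Φ + B = 0)
    (hΦle : ∀ i j, ‖Φ i j‖ ≤ Φt i j)
    (Φs : ℕ → Matrix (Fin m) (Fin n) ℂ) (hΦs0 : Φs 0 = 0)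
    (hΦs : ∀ k, (A - Φs k * C) * Φs (k + 1) + Φs (k + 1) * (D - C * Φs k) =
      B - Φs k * C * Φs k)
    (Φts : ℕ → Matrix (Fin m) (Fin n) ℝ) (hΦts0 : Φts 0 = 0)
    (hΦts : ∀ k, (At - Φts k * Ct) * Φts (k + 1) + Φts (k + 1) * (Dt - Ct * Φts k) =
      Bt - Φts k * Ct * Φts k) :
    (∀ k i j, ‖(Φ - Φs k) i j‖ ≤ (Φt - Φts k) i j) ∧
    ∀ i j, Tendsto (fun k => Φs k i j) atTop (nhds (Φ i j)) := by
  obtain ⟨hM, hlim⟩ := tendsto_newton_of_isNonsingMMatrix hQt hΦtPos hΦtSol hΦtMin hΦts0 hΦts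
  have herr := norm_sub_newton_le hω hQtle hM hΦs0 hΦs hΦts0 hΦts hΦSol hΦtSol hΦle
  refine ⟨herr, fun i j => tendsto_iff_norm_sub_tendsto_zero.2 ?_⟩
  have hgap : Tendsto (fun k => (Φt - Φts k) i j) atTop (𝓝 0) := by
    simpa using (tendsto_const_nhds (x := Φt i j)).sub
      (tendsto_pi_nhds.1 (tendsto_pi_nhds.1 hlim i) j)
  exact squeeze_zero (fun k => norm_nonneg _) (fun k => by rw [norm_sub_rev]; exact herr k i j)
    hgap

/-- The Newton sequence for the complex NARE converges to the solution `Φ` with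
`|Φ| ≤ Φ̃`, with errors entrywise dominated by those of the Newton sequence for the dominating
real M-matrix NARE. -/
theorem stmt8 {m n : ℕ} (ω : ℝ) (hω : ω ∈ Set.Icc (0 : ℝ) 1)
    (A : Matrix (Fin m) (Fin m) ℂ) (B : Matrix (Fin m) (Fin n) ℂ)
    (C : Matrix (Fin n) (Fin m) ℂ) (D : Matrix (Fin n) (Fin n) ℂ)
    (At : Matrix (Fin m) (Fin m) ℝ) (Bt : Matrix (Fin m) (Fin n) ℝ)
    (Ct : Matrix (Fin n) (Fin m) ℝ) (Dt : Matrix (Fin n) (Fin n) ℝ)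
    (hQ : IsNonsingMMatrix (omegaComp ω (Matrix.fromBlocks D (-C) (-B) A)))
    (hQ1 : ∀ i, 0 < ((omegaComp ω (Matrix.fromBlocks D (-C) (-B) A)) *ᵥ 1) i)
    (hQt : IsNonsingMMatrix (Matrix.fromBlocks Dt (-Ct) (-Bt) At))
    (hQtle : ∀ i j, Matrix.fromBlocks Dt (-Ct) (-Bt) At i j ≤
      omegaComp ω (Matrix.fromBlocks D (-C) (-B) A) i j)
    (hQt1 : ∀ i, 0 < ((Matrix.fromBlocks Dt (-Ct) (-Bt) At) *ᵥ 1) i)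
    (Φt : Matrix (Fin m) (Fin n) ℝ)
    (hΦtPos : ∀ i j, 0 ≤ Φt i j)
    (hΦtSol : Φt * Ct * Φt - Φt * Dt - At * Φt + Bt = 0)
    (hΦtMin : ∀ Z : Matrix (Fin m) (Fin n) ℝ, (∀ i j, 0 ≤ Z i j) →
      Z * Ct * Z - Z * Dt - At * Z + Bt = 0 → ∀ i j, Φt i j ≤ Z i j)
    (Φ : Matrix (Fin m) (Fin n) ℂ)
    (hΦSol : Φ * C * Φ - Φ * D - A * Φ + B = 0)
    (hΦle : ∀ i j, ‖Φ i j‖ ≤ Φt i j)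
    (Φs : ℕ → Matrix (Fin m) (Fin n) ℂ) (hΦs0 : Φs 0 = 0)
    (hΦs : ∀ k, (A - Φs k * C) * Φs (k + 1) + Φs (k + 1) * (D - C * Φs k) =
      B - Φs k * C * Φs k)
    (Φts : ℕ → Matrix (Fin m) (Fin n) ℝ) (hΦts0 : Φts 0 = 0)
    (hΦts : ∀ k, (At - Φts k * Ct) * Φts (k + 1) + Φts (k + 1) * (Dt - Ct * Φts k) =
      Bt - Φts k * Ct * Φts k) :
    (∀ k i j, ‖(Φ - Φs k) i j‖ ≤ (Φt - Φts k) i j) ∧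
    ∀ i j, Tendsto (fun k => Φs k i j) atTop (nhds (Φ i j)) :=
  stmt8_general ω hω A B C D At Bt Ct Dt hQt hQtle Φt hΦtPos hΦtSol hΦtMin Φ hΦSol hΦle Φs hΦs0 hΦs
    Φts hΦts0 hΦts
end
end

section
/- Let A ∈ R^{n×n} be a nonsingular M-matrix written as A = D₁ − N₁ with D₁ diagonal having positive diagonal entries and N₁ ≥ 0 entrywise. Let B ∈ C^{n×n} be written as B = D₂ − N₂ with D₂ diagonal. If D₁ ≤ |D₂| and |N₂| ≤ N₁ entrywise, then B is nonsingular and, with C = |D₁D₂⁻¹|, both |B⁻¹| ≤ A⁻¹C and |B⁻¹| ≤ CA⁻¹ hold entrywise. -/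
open Matrix Filter Kronecker

noncomputable section

/-! A nonsingular M-matrix `A` is monotone: `A w ≥ 0` forces `w ≥ 0`, as one sees at an index
minimising `w / u`. Hence `A` is invertible with `A⁻¹ ≥ 0`. Write `A = diag e - N₁`,
`B = diag d - N₂` and `c = e / |d| ≤ 1`, the diagonal of `C`. The triangle inequality gives
`A |x| ≤ c |B x|` and `|x| A ≤ |x B| c` for every complex vector `x`; so `B x = 0` forces `x = 0`,
and applied to the columns and rows of `B⁻¹` it gives `A |B⁻¹| ≤ C` and `|B⁻¹| A ≤ C`.
Multiplying by `A⁻¹ ≥ 0` yields the two bounds. -/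

namespace IsNonsingMMatrix

variable {ι : Type*} [Fintype ι] {M : Matrix ι ι ℝ}

theorem nonneg_of_mulVec_nonneg_s12 (hM : IsNonsingMMatrix M) {w : ι → ℝ}
    (hw : ∀ i, 0 ≤ (M *ᵥ w) i) (i : ι) : 0 ≤ w i := by
  obtain ⟨hoff, u, hu, hMu⟩ := hM
  by_contra! hwi
  -- `v = w - m u` is nonnegative and vanishes at `i₀`, so `(M v) i₀ ≤ 0` while `m (M u) i₀ < 0`.
  obtain ⟨i₀, -, hmin⟩ := Finset.univ.exists_min_image (fun k => w k / u k) ⟨i, Finset.mem_univ i⟩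
  set m := w i₀ / u i₀
  have hm : m < 0 := (hmin i (Finset.mem_univ i)).trans_lt (div_neg_of_neg_of_pos hwi (hu i))
  have hv : ∀ k, 0 ≤ w k - m * u k := fun k => by
    have := (le_div_iff₀ (hu k)).mp (hmin k (Finset.mem_univ k))
    linarith
  have hv₀ : w i₀ - m * u i₀ = 0 := by rw [div_mul_cancel₀ _ (hu i₀).ne', sub_self]
  have hMv : (M *ᵥ fun k => w k - m * u k) i₀ ≤ 0 := Finset.sum_nonpos fun k _ => by
    rcases eq_or_ne i₀ k with rfl | hk
    · simp only [hv₀, mul_zero, le_refl]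
    · exact mul_nonpos_of_nonpos_of_nonneg (hoff i₀ k hk) (hv k)
  have hsplit : M *ᵥ w = m • (M *ᵥ u) + M *ᵥ fun k => w k - m * u k := by
    rw [← mulVec_smul, ← mulVec_add]
    congr 1
    ext k
    simp
  have := hw i₀
  rw [hsplit, Pi.add_apply, Pi.smul_apply, smul_eq_mul] at this
  nlinarith [hMu i₀]

variable [DecidableEq ι]

theorem isUnit_det (hM : IsNonsingMMatrix M) : IsUnit M.det := by
  refine isUnit_iff_ne_zero.mpr fun hdet => ?_
  obtain ⟨v, hv, hMv⟩ := exists_mulVec_eq_zero_iff.mpr hdet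
  refine hv (funext fun i => le_antisymm ?_ (hM.nonneg_of_mulVec_nonneg_s12 (by simp [hMv]) i))
  have := hM.nonneg_of_mulVec_nonneg_s12 (w := -v) (by simp [mulVec_neg, hMv]) i
  simpa using this

theorem inv_nonneg (hM : IsNonsingMMatrix M) (i j : ι) : 0 ≤ M⁻¹ i j := by
  have hcol : M *ᵥ M⁻¹.col j = Pi.single j 1 := by
    rw [← mulVec_single_one, mulVec_mulVec, mul_nonsing_inv _ hM.isUnit_det, one_mulVec]
  refine hM.nonneg_of_mulVec_nonneg_s12 (w := M⁻¹.col j) (fun k => ?_) i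
  rw [hcol, Pi.single_apply]
  split_ifs <;> norm_num

variable {κ : Type*}

theorem le_inv_mul_of_mul_le (hM : IsNonsingMMatrix M) {X Y : Matrix ι κ ℝ}
    (h : ∀ i j, (M * X) i j ≤ Y i j) (i : ι) (j : κ) : X i j ≤ (M⁻¹ * Y) i j := by
  have hXY : M⁻¹ * Y - X = M⁻¹ * (Y - M * X) := by
    rw [Matrix.mul_sub, ← Matrix.mul_assoc, nonsing_inv_mul _ hM.isUnit_det, Matrix.one_mul]
  rw [← sub_nonneg, ← Matrix.sub_apply, hXY, mul_apply]
  exact Finset.sum_nonneg fun k _ => mul_nonneg (hM.inv_nonneg i k) (sub_nonneg.mpr (h k j))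

theorem le_mul_inv_of_mul_le (hM : IsNonsingMMatrix M) {X Y : Matrix κ ι ℝ}
    (h : ∀ i j, (X * M) i j ≤ Y i j) (i : κ) (j : ι) : X i j ≤ (Y * M⁻¹) i j := by
  have hXY : Y * M⁻¹ - X = (Y - X * M) * M⁻¹ := by
    rw [Matrix.sub_mul, Matrix.mul_assoc, mul_nonsing_inv _ hM.isUnit_det, Matrix.mul_one]
  rw [← sub_nonneg, ← Matrix.sub_apply, hXY, mul_apply]
  exact Finset.sum_nonneg fun k _ => mul_nonneg (sub_nonneg.mpr (h i k)) (hM.inv_nonneg k j)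

end IsNonsingMMatrix

theorem mul_norm_sub_sum_le {𝕜 κ : Type*} [NormedDivisionRing 𝕜] (s : Finset κ) {e : ℝ} {d x : 𝕜}
    (he : 0 < e) (hed : e ≤ ‖d‖) {a : κ → 𝕜} {b : κ → ℝ} (hab : ∀ k, ‖a k‖ ≤ b k) :
    e * ‖x‖ - ∑ k ∈ s, b k ≤ e / ‖d‖ * ‖d * x - ∑ k ∈ s, a k‖ := by
  have hd : 0 < ‖d‖ := he.trans_le hed
  have hb : 0 ≤ ∑ k ∈ s, b k := Finset.sum_nonneg fun k _ => (norm_nonneg _).trans (hab k)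
  have hed' : e / ‖d‖ ≤ 1 := (div_le_one hd).mpr hed
  calc e * ‖x‖ - ∑ k ∈ s, b k ≤ e * ‖x‖ - e / ‖d‖ * ∑ k ∈ s, b k := by nlinarith
    _ = e / ‖d‖ * (‖d * x‖ - ∑ k ∈ s, b k) := by rw [norm_mul]; field_simp
    _ ≤ e / ‖d‖ * (‖d * x‖ - ‖∑ k ∈ s, a k‖) := by
        gcongr
        exact (norm_sum_le _ _).trans (Finset.sum_le_sum fun k _ => hab k)
    _ ≤ e / ‖d‖ * ‖d * x - ∑ k ∈ s, a k‖ := by gcongr; exact norm_sub_norm_le _ _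

section Comparison

variable {ι κ : Type*} [Fintype ι] [DecidableEq ι] {e : ι → ℝ} {d : ι → ℂ}
  {N₁ : Matrix ι ι ℝ} {N₂ : Matrix ι ι ℂ}

theorem mulVec_norm_le (he : ∀ i, 0 < e i) (hed : ∀ i, e i ≤ ‖d i‖)
    (hN : ∀ i j, ‖N₂ i j‖ ≤ N₁ i j) (x : ι → ℂ) (i : ι) :
    ((diagonal e - N₁) *ᵥ fun k => ‖x k‖) i ≤ e i / ‖d i‖ * ‖((diagonal d - N₂) *ᵥ x) i‖ := by
  rw [sub_mulVec, sub_mulVec, Pi.sub_apply, Pi.sub_apply, mulVec_diagonal, mulVec_diagonal]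
  refine mul_norm_sub_sum_le _ (he i) (hed i) fun k => ?_
  rw [norm_mul]
  exact mul_le_mul_of_nonneg_right (hN i k) (norm_nonneg _)

theorem norm_vecMul_le (he : ∀ i, 0 < e i) (hed : ∀ i, e i ≤ ‖d i‖)
    (hN : ∀ i j, ‖N₂ i j‖ ≤ N₁ i j) (x : ι → ℂ) (j : ι) :
    ((fun k => ‖x k‖) ᵥ* (diagonal e - N₁)) j ≤ ‖(x ᵥ* (diagonal d - N₂)) j‖ * (e j / ‖d j‖) := by
  rw [vecMul_sub, vecMul_sub, Pi.sub_apply, Pi.sub_apply, vecMul_diagonal, vecMul_diagonal,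
    mul_comm (‖x j‖), mul_comm (x j), mul_comm ‖_‖]
  refine mul_norm_sub_sum_le _ (he j) (hed j) fun k => ?_
  rw [norm_mul]
  exact mul_le_mul_of_nonneg_left (hN k j) (norm_nonneg _)

theorem isUnit_det_of_dominated (hA : IsNonsingMMatrix (diagonal e - N₁)) (he : ∀ i, 0 < e i)
    (hed : ∀ i, e i ≤ ‖d i‖) (hN : ∀ i j, ‖N₂ i j‖ ≤ N₁ i j) :
    IsUnit (diagonal d - N₂).det := by
  refine isUnit_iff_ne_zero.mpr fun hdet => ?_
  obtain ⟨x, hx, hBx⟩ := exists_mulVec_eq_zero_iff.mpr hdet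
  have hneg : ∀ i, 0 ≤ -‖x i‖ := hA.nonneg_of_mulVec_nonneg_s12 fun i => by
    have := mulVec_norm_le he hed hN x i
    rw [hBx, Pi.zero_apply, norm_zero, mul_zero] at this
    rw [show (fun k => -‖x k‖) = -fun k => ‖x k‖ from rfl, mulVec_neg, Pi.neg_apply]
    exact neg_nonneg.mpr this
  exact hx (funext fun i => norm_le_zero_iff.mp (neg_nonneg.mp (hneg i)))

theorem norm_inv_le_of_dominated (hA : IsNonsingMMatrix (diagonal e - N₁)) (he : ∀ i, 0 < e i)
    (hed : ∀ i, e i ≤ ‖d i‖) (hN : ∀ i j, ‖N₂ i j‖ ≤ N₁ i j) :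
    (∀ i j, ‖(diagonal d - N₂)⁻¹ i j‖ ≤
      ((diagonal e - N₁)⁻¹ * diagonal fun i => e i / ‖d i‖) i j) ∧
    (∀ i j, ‖(diagonal d - N₂)⁻¹ i j‖ ≤
      ((diagonal fun i => e i / ‖d i‖) * (diagonal e - N₁)⁻¹) i j) := by
  have hB := isUnit_det_of_dominated hA he hed hN
  have hone : ∀ i j, (diagonal fun i => e i / ‖d i‖) i j
      = e i / ‖d i‖ * ‖(1 : Matrix ι ι ℂ) i j‖ := fun i j => by
    rw [diagonal_apply, one_apply]
    split_ifs with h <;> simp [h]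
  have hone' : ∀ i j, (diagonal fun i => e i / ‖d i‖) i j
      = ‖(1 : Matrix ι ι ℂ) i j‖ * (e j / ‖d j‖) := fun i j => by
    rw [diagonal_apply, one_apply]
    split_ifs with h <;> simp [h]
  constructor
  · refine hA.le_inv_mul_of_mul_le (X := cabs (diagonal d - N₂)⁻¹) (fun i j => ?_)
    rw [hone, ← mul_nonsing_inv _ hB]
    exact mulVec_norm_le he hed hN (fun k => (diagonal d - N₂)⁻¹ k j) i
  · refine hA.le_mul_inv_of_mul_le (X := cabs (diagonal d - N₂)⁻¹) (fun i j => ?_)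
    rw [hone', ← nonsing_inv_mul _ hB]
    exact norm_vecMul_le he hed hN (fun k => (diagonal d - N₂)⁻¹ i k) j

end Comparison

theorem cabs_diagonal_map_ofReal_mul_inv {ι : Type*} [Fintype ι] [DecidableEq ι] {e : ι → ℝ}
    {d : ι → ℂ} (he : ∀ i, 0 ≤ e i) (hd : ∀ i, d i ≠ 0) :
    cabs ((diagonal e).map Complex.ofReal * (diagonal d)⁻¹) = diagonal fun i => e i / ‖d i‖ := by
  have hinv : (diagonal d)⁻¹ = diagonal d⁻¹ :=
    inv_eq_right_inv (by rw [diagonal_mul_diagonal, ← diagonal_one]; simp [hd])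
  rw [diagonal_map Complex.ofReal_zero, hinv, diagonal_mul_diagonal]
  ext i j
  rw [cabs, of_apply, diagonal_apply, diagonal_apply]
  split_ifs <;> simp [abs_of_nonneg (he i), div_eq_mul_inv]

theorem stmt12_general {n : ℕ} (A D₁ N₁ : Matrix (Fin n) (Fin n) ℝ)
    (B D₂ N₂ : Matrix (Fin n) (Fin n) ℂ)
    (hA : IsNonsingMMatrix A) (hA' : A = D₁ - N₁)
    (hD₁diag : ∀ i j, i ≠ j → D₁ i j = 0) (hD₁pos : ∀ i, 0 < D₁ i i)
    (hB : B = D₂ - N₂) (hD₂diag : ∀ i j, i ≠ j → D₂ i j = 0)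
    (h1 : ∀ i j, D₁ i j ≤ ‖D₂ i j‖)
    (h2 : ∀ i j, ‖N₂ i j‖ ≤ N₁ i j) :
    IsUnit B.det ∧
    (∀ i j, ‖B⁻¹ i j‖ ≤
      (A⁻¹ * cabs (D₁.map Complex.ofReal * D₂⁻¹)) i j) ∧
    (∀ i j, ‖B⁻¹ i j‖ ≤
      (cabs (D₁.map Complex.ofReal * D₂⁻¹) * A⁻¹) i j) := by
  subst hA' hB
  obtain ⟨e, rfl⟩ : ∃ e, D₁ = diagonal e := ⟨_, (IsDiag.diagonal_diag hD₁diag).symm⟩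
  obtain ⟨d, rfl⟩ : ∃ d, D₂ = diagonal d := ⟨_, (IsDiag.diagonal_diag hD₂diag).symm⟩
  have he : ∀ i, 0 < e i := by simpa using hD₁pos
  have hed : ∀ i, e i ≤ ‖d i‖ := fun i => by simpa using h1 i i
  rw [cabs_diagonal_map_ofReal_mul_inv (fun i => (he i).le)
    fun i => norm_pos_iff.mp ((he i).trans_le (hed i))]
  exact ⟨isUnit_det_of_dominated hA he hed h2, norm_inv_le_of_dominated hA he hed h2⟩

/-- if a nonsingular M-matrix `A = D₁ − N₁` (diagonal/nonnegative splitting)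
dominates `B = D₂ − N₂` in the sense `D₁ ≤ |D₂|`, `|N₂| ≤ N₁`, then `B` is nonsingular and
`|B⁻¹| ≤ A⁻¹C` and `|B⁻¹| ≤ CA⁻¹` with `C = |D₁D₂⁻¹|`. -/
theorem stmt12 {n : ℕ} (A D₁ N₁ : Matrix (Fin n) (Fin n) ℝ)
    (B D₂ N₂ : Matrix (Fin n) (Fin n) ℂ)
    (hA : IsNonsingMMatrix A) (hA' : A = D₁ - N₁)
    (hD₁diag : ∀ i j, i ≠ j → D₁ i j = 0) (hD₁pos : ∀ i, 0 < D₁ i i)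
    (hN₁ : ∀ i j, 0 ≤ N₁ i j)
    (hB : B = D₂ - N₂) (hD₂diag : ∀ i j, i ≠ j → D₂ i j = 0)
    (h1 : ∀ i j, D₁ i j ≤ ‖D₂ i j‖)
    (h2 : ∀ i j, ‖N₂ i j‖ ≤ N₁ i j) :
    IsUnit B.det ∧
    (∀ i j, ‖B⁻¹ i j‖ ≤
      (A⁻¹ * cabs (D₁.map Complex.ofReal * D₂⁻¹)) i j) ∧
    (∀ i j, ‖B⁻¹ i j‖ ≤
      (cabs (D₁.map Complex.ofReal * D₂⁻¹) * A⁻¹) i j) :=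
  stmt12_general A D₁ N₁ B D₂ N₂ hA hA' hD₁diag hD₁pos hB hD₂diag h1 h2
end
end
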